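/- The Bad Gadget SPP instance has no stable path assignment. Concretely: let the graph have nodes {0, a, b, c}, with each of a, b, c adjacent to the destination 0 and to each other (forming a triangle), and let the ranking functions be: a ranks ab0 > a0, b ranks bc0 > b0, c ranks ca0 > c0, with every other path (including every path of length three around the triangle) ranked strictly below the null path ε. Then no path assignment π is stable, i.e., for every path assignment there exists a node among a, b, c whose activation changes its selected path. -/

import Mathlib

open SimpleGraph

/-- A network: a finite graph with a distinguished destination node `dest` (the node "0"). -/
structure SPPNetwork where
  V : Type
  fin : Fintype V
  deq : DecidableEq V
  graph : SimpleGraph V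
  dest : V

attribute [instance] SPPNetwork.fin SPPNetwork.deq

namespace SPPNetwork

variable (N : SPPNetwork)

/-- A route: a simple path from `v` to the destination. -/
abbrev RPath (v : N.V) : Type := {p : N.graph.Walk v N.dest // p.IsPath}

/-- A ranking function assigns a real value to every route from every node,
and to the null route ε (encoded as `none`). -/
abbrev Ranking : Type := ∀ v : N.V, Option (N.RPath v) → ℝ

/-- Legality of a ranking at a node: two choices get the same rank only if they are
equal or are both actual paths sharing the same first edge (same second vertex). -/
def NodeLegal {v : N.V} (r : Option (N.RPath v) → ℝ) : Prop :=
  ∀ p q : Option (N.RPath v), r p = r q →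
    p = q ∨ ∃ p' q', p = some p' ∧ q = some q' ∧ p'.val.getVert 1 = q'.val.getVert 1

def Legal (lam : N.Ranking) : Prop := ∀ v : N.V, N.NodeLegal (lam v)

/-- The trivial route from the destination to itself. -/
def trivialPath : N.RPath N.dest := ⟨Walk.nil, Walk.IsPath.nil⟩

/-- A path assignment gives each node a route (or ε). -/
abbrev Assignment : Type := ∀ v : N.V, Option (N.RPath v)

/-- A proper path assignment: the destination selects the trivial route to itself. -/
def IsAssignment (π : N.Assignment) : Prop := π N.dest = some N.trivialPath

/-- The choices available to `v` under path assignment `π`: the null route ε, together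
with every simple path of the form `v w π(w)` over neighbors `w` of `v`. -/
def Choices (π : N.Assignment) (v : N.V) : Set (Option (N.RPath v)) :=
  {c | c = none ∨ ∃ (w : N.V) (h : N.graph.Adj v w) (q : N.RPath w),
        π w = some q ∧ ∃ hp : (Walk.cons h q.val).IsPath, c = some ⟨Walk.cons h q.val, hp⟩}

/-- Node `v` is stable in `π`: activating `v` produces no change, i.e. `v`'s current
selection is among its choices and is ranked at least as high as every choice. -/
def StableAt (lam : N.Ranking) (π : N.Assignment) (v : N.V) : Prop :=
  π v ∈ N.Choices π v ∧ ∀ c ∈ N.Choices π v, lam v c ≤ lam v (π v)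

/-- A stable path assignment: every node other than the destination is stable. -/
def IsStable (lam : N.Ranking) (π : N.Assignment) : Prop :=
  N.IsAssignment π ∧ ∀ v, v ≠ N.dest → N.StableAt lam π v

/-- A fair activation sequence: never activates the destination, and activates every
other node infinitely often. -/
def Fair (A : ℕ → N.V) : Prop :=
  (∀ t, A t ≠ N.dest) ∧ ∀ v, v ≠ N.dest → ∀ t, ∃ s, t ≤ s ∧ A s = v

/-- `π` is a run of the protocol under activation sequence `A`: at each step `t`, only
the activated node `A t` changes its selection, and it adopts a rank-maximal choice. -/
def IsRun (lam : N.Ranking) (A : ℕ → N.V) (π : ℕ → N.Assignment) : Prop :=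
  N.IsAssignment (π 0) ∧
  ∀ t, (∀ v, v ≠ A t → π (t + 1) v = π t v) ∧
    π (t + 1) (A t) ∈ N.Choices (π t) (A t) ∧
    ∀ c ∈ N.Choices (π t) (A t), lam (A t) c ≤ lam (A t) (π (t + 1) (A t))

/-- Safety: every run under every fair activation sequence, from every initial path
assignment, eventually produces a stable path assignment. -/
def Safe (lam : N.Ranking) : Prop :=
  ∀ A : ℕ → N.V, N.Fair A → ∀ π : ℕ → N.Assignment, N.IsRun lam A π →
    ∃ t, N.IsStable lam (π t)

end SPPNetwork

/-- An embedding of network `N` into network `G` as an (induced) subgraph,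
preserving the destination. -/
structure NetworkEmbedding (N G : SPPNetwork) where
  toEmb : N.graph ↪g G.graph
  map_dest : toEmb N.dest = G.dest

namespace NetworkEmbedding

variable {N G : SPPNetwork} (f : NetworkEmbedding N G)

/-- The image in `G` of a route of `N`. -/
def mapPath {v : N.V} (P : N.RPath v) : G.RPath (f.toEmb v) :=
  ⟨(P.val.map f.toEmb.toHom).copy rfl f.map_dest, by
    rw [SimpleGraph.Walk.isPath_copy]
    exact SimpleGraph.Walk.map_isPath_of_injective f.toEmb.injective P.prop⟩

/-- A walk of `G` is contained in the copy of `N` if all its vertices lie in the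
image of the embedding. -/
def Contained {u : G.V} (p : G.graph.Walk u G.dest) : Prop :=
  ∀ y ∈ p.support, y ∈ Set.range ⇑f.toEmb

end NetworkEmbedding

/-- `lamS` deploys the ranking `lamN` on the copy of `N` inside `G` (via `f`): on nodes
of the copy it ranks routes inside the copy as `lamN` does (and ranks ε likewise), and
ranks every route leaving the copy strictly below ε. -/
def DeployedOn {N G : SPPNetwork} (f : NetworkEmbedding N G)
    (lamN : N.Ranking) (lamS : G.Ranking) : Prop :=
  (∀ v : N.V, lamS (f.toEmb v) none = lamN v none) ∧
  (∀ (v : N.V) (P : N.RPath v),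
      lamS (f.toEmb v) (some (f.mapPath P)) = lamN v (some P)) ∧
  (∀ (v : N.V) (Q : G.RPath (f.toEmb v)), ¬ f.Contained Q.val →
      lamS (f.toEmb v) (some Q) < lamS (f.toEmb v) none)

/-- `lamS` is the partial deployment of `lamN` (on the copy of `N` given by `f`)
in the instance `(G, lamG)`: it agrees with `lamG` outside the copy and deploys
`lamN` on the copy. -/
def IsPartialDeployment {N G : SPPNetwork} (f : NetworkEmbedding N G)
    (lamN : N.Ranking) (lamG : G.Ranking) (lamS : G.Ranking) : Prop :=
  (∀ u : G.V, u ∉ Set.range ⇑f.toEmb → lamS u = lamG u) ∧ DeployedOn f lamN lamS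

/-- The Bad Gadget network: nodes `0, 1, 2, 3` (destination `0` and `a = 1`, `b = 2`,
`c = 3`), with every pair of nodes adjacent (the triangle `a b c`, each node also
adjacent to `0`). -/
abbrev badNet : SPPNetwork :=
  { V := Fin 4
    fin := inferInstance
    deq := inferInstance
    graph := ⊤
    dest := 0 }

section BadGadgetPaths

open SimpleGraph

private lemma badAdj (u v : Fin 4) (h : u ≠ v) : badNet.graph.Adj u v :=
  (SimpleGraph.top_adj u v).mpr h

/-- The route `a 0`. -/
def pA0 : badNet.RPath 1 :=
  ⟨Walk.cons (badAdj 1 0 (by decide)) Walk.nil, by simp⟩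

/-- The route `a b 0`. -/
def pAB0 : badNet.RPath 1 :=
  ⟨Walk.cons (badAdj 1 2 (by decide))
    (Walk.cons (badAdj 2 0 (by decide)) Walk.nil), by simp⟩

/-- The route `b 0`. -/
def pB0 : badNet.RPath 2 :=
  ⟨Walk.cons (badAdj 2 0 (by decide)) Walk.nil, by simp⟩

/-- The route `b c 0`. -/
def pBC0 : badNet.RPath 2 :=
  ⟨Walk.cons (badAdj 2 3 (by decide))
    (Walk.cons (badAdj 3 0 (by decide)) Walk.nil), by simp⟩

/-- The route `c 0`. -/
def pC0 : badNet.RPath 3 :=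
  ⟨Walk.cons (badAdj 3 0 (by decide)) Walk.nil, by simp⟩

/-- The route `c a 0`. -/
def pCA0 : badNet.RPath 3 :=
  ⟨Walk.cons (badAdj 3 1 (by decide))
    (Walk.cons (badAdj 1 0 (by decide)) Walk.nil), by simp⟩

end BadGadgetPaths

/-!
At a stable assignment each gadget node `v` selects its direct route `v 0` or its preferred
route `v u 0` through its successor `u`, since everything else ranks below ε and `v 0` is
always available. It selects `v u 0` exactly when `u` selects `u 0`, i.e. exactly when `u` does
not select its own preferred route. Around the odd cycle `a → b → c → a` this alternation of
"preferred" and "not preferred" cannot close up.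
-/

namespace SPPNetwork

variable {N : SPPNetwork}

def PermitsExactly (lam : N.Ranking) (v : N.V) (P Q : N.RPath v) : Prop :=
  lam v (some Q) < lam v (some P) ∧ lam v none < lam v (some Q) ∧
    ∀ q, q ≠ P → q ≠ Q → lam v (some q) < lam v none

variable {lam : N.Ranking} {π : N.Assignment} {v : N.V}

theorem PermitsExactly.ne {P Q : N.RPath v} (hrank : N.PermitsExactly lam v P Q) : P ≠ Q := by
  rintro rfl
  exact lt_irrefl _ hrank.1

theorem some_mem_choices_iff {w : N.V} {h : N.graph.Adj v w} {P : N.RPath v} {q : N.RPath w}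
    (hP : P.val = Walk.cons h q.val) : some P ∈ N.Choices π v ↔ π w = some q := by
  obtain ⟨P, hPpath⟩ := P
  subst hP
  constructor
  · rintro (hnone | ⟨w', h', q', hq', _, hPeq⟩)
    · cases hnone
    · obtain ⟨rfl, hqq'⟩ := Walk.cons.inj (congrArg Subtype.val (Option.some.inj hPeq))
      rwa [Subtype.ext (eq_of_heq hqq')]
  · intro hq
    exact Or.inr ⟨w, h, q, hq, hPpath, rfl⟩

theorem StableAt.ne_of_lt {c x : Option (N.RPath v)} (hs : N.StableAt lam π v)
    (hc : c ∈ N.Choices π v) (hlt : lam v x < lam v c) : π v ≠ x := by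
  rintro rfl
  exact (hs.2 c hc).not_gt hlt

theorem StableAt.eq_or_eq {P Q : N.RPath v} (hs : N.StableAt lam π v)
    (hrank : N.PermitsExactly lam v P Q) (hQ : some Q ∈ N.Choices π v) :
    π v = some P ∨ π v = some Q := by
  obtain ⟨-, hQ_none, hbelow⟩ := hrank
  match hπv : π v with
  | none => exact absurd hπv (hs.ne_of_lt hQ hQ_none)
  | some q =>
    by_contra! hq
    have hlt : lam v (some q) < lam v (some Q) :=
      (hbelow q (fun h ↦ hq.1 (h ▸ rfl)) (fun h ↦ hq.2 (h ▸ rfl))).trans hQ_none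
    exact hs.ne_of_lt hQ hlt hπv

theorem StableAt.eq_some_iff_ne_some {P Q : N.RPath v} (hs : N.StableAt lam π v)
    (hrank : N.PermitsExactly lam v P Q) (hQ : some Q ∈ N.Choices π v) :
    π v = some Q ↔ π v ≠ some P :=
  ⟨fun h h' ↦ hrank.ne (Option.some.inj (h'.symm.trans h)), (hs.eq_or_eq hrank hQ).resolve_left⟩

theorem StableAt.eq_preferred_iff_ne_preferred {u : N.V} {hv : N.graph.Adj v N.dest}
    {hu : N.graph.Adj u N.dest} {hvu : N.graph.Adj v u} {P Q : N.RPath v} {Pᵤ Qᵤ : N.RPath u}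
    (hπ : N.IsAssignment π) (hs : N.StableAt lam π v) (hsᵤ : N.StableAt lam π u)
    (hrank : N.PermitsExactly lam v P Q) (hrankᵤ : N.PermitsExactly lam u Pᵤ Qᵤ)
    (hP : P.val = Walk.cons hvu Qᵤ.val) (hQ : Q.val = Walk.cons hv Walk.nil)
    (hQᵤ : Qᵤ.val = Walk.cons hu Walk.nil) :
    π v = some P ↔ π u ≠ some Pᵤ := by
  have hQmem : some Q ∈ N.Choices π v := (some_mem_choices_iff (q := N.trivialPath) hQ).2 hπ
  have hQᵤmem : some Qᵤ ∈ N.Choices π u := (some_mem_choices_iff (q := N.trivialPath) hQᵤ).2 hπ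
  rw [← hsᵤ.eq_some_iff_ne_some hrankᵤ hQᵤmem, ← some_mem_choices_iff hP]
  constructor
  · intro h
    exact h ▸ hs.1
  · intro hPmem
    exact (hs.eq_or_eq hrank hQmem).resolve_right (hs.ne_of_lt hPmem hrank.1)

end SPPNetwork

theorem badGadget_no_stable_assignment_general
    (lam : badNet.Ranking)
    (ha1 : lam 1 (some pA0) < lam 1 (some pAB0))
    (ha2 : lam 1 none < lam 1 (some pA0))
    (ha3 : ∀ q : badNet.RPath 1, q ≠ pAB0 → q ≠ pA0 → lam 1 (some q) < lam 1 none)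
    (hb1 : lam 2 (some pB0) < lam 2 (some pBC0))
    (hb2 : lam 2 none < lam 2 (some pB0))
    (hb3 : ∀ q : badNet.RPath 2, q ≠ pBC0 → q ≠ pB0 → lam 2 (some q) < lam 2 none)
    (hc1 : lam 3 (some pC0) < lam 3 (some pCA0))
    (hc2 : lam 3 none < lam 3 (some pC0))
    (hc3 : ∀ q : badNet.RPath 3, q ≠ pCA0 → q ≠ pC0 → lam 3 (some q) < lam 3 none) :
    ∀ π : badNet.Assignment, badNet.IsAssignment π →
      ∃ v ∈ ({1, 2, 3} : Set (Fin 4)), ¬ badNet.StableAt lam π v := by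
  intro π hπ
  by_contra! hstable
  have hs₁ := hstable 1 (by simp)
  have hs₂ := hstable 2 (by simp)
  have hs₃ := hstable 3 (by simp)
  have hrank₁ : badNet.PermitsExactly lam 1 pAB0 pA0 := ⟨ha1, ha2, ha3⟩
  have hrank₂ : badNet.PermitsExactly lam 2 pBC0 pB0 := ⟨hb1, hb2, hb3⟩
  have hrank₃ : badNet.PermitsExactly lam 3 pCA0 pC0 := ⟨hc1, hc2, hc3⟩
  have hab : π 1 = some pAB0 ↔ π 2 ≠ some pBC0 :=
    hs₁.eq_preferred_iff_ne_preferred hπ hs₂ hrank₁ hrank₂ rfl rfl rfl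
  have hbc : π 2 = some pBC0 ↔ π 3 ≠ some pCA0 :=
    hs₂.eq_preferred_iff_ne_preferred hπ hs₃ hrank₂ hrank₃ rfl rfl rfl
  have hca : π 3 = some pCA0 ↔ π 1 ≠ some pAB0 :=
    hs₃.eq_preferred_iff_ne_preferred hπ hs₁ hrank₃ hrank₁ rfl rfl rfl
  tauto

/-- **The Bad Gadget has no stable path assignment.**  Whenever the ranking function
`lam` on `badNet` satisfies: `a` ranks `a b 0 > a 0 > ε` and everything else below ε,
`b` ranks `b c 0 > b 0 > ε` and everything else below ε, and `c` ranks
`c a 0 > c 0 > ε` and everything else below ε, then for every path assignment some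
node among `a`, `b`, `c` is unstable (its activation changes its selection). -/
theorem badGadget_no_stable_assignment
    (lam : badNet.Ranking) (hlegal : badNet.Legal lam)
    (ha1 : lam 1 (some pA0) < lam 1 (some pAB0))
    (ha2 : lam 1 none < lam 1 (some pA0))
    (ha3 : ∀ q : badNet.RPath 1, q ≠ pAB0 → q ≠ pA0 → lam 1 (some q) < lam 1 none)
    (hb1 : lam 2 (some pB0) < lam 2 (some pBC0))
    (hb2 : lam 2 none < lam 2 (some pB0))
    (hb3 : ∀ q : badNet.RPath 2, q ≠ pBC0 → q ≠ pB0 → lam 2 (some q) < lam 2 none)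
    (hc1 : lam 3 (some pC0) < lam 3 (some pCA0))
    (hc2 : lam 3 none < lam 3 (some pC0))
    (hc3 : ∀ q : badNet.RPath 3, q ≠ pCA0 → q ≠ pC0 → lam 3 (some q) < lam 3 none) :
    ∀ π : badNet.Assignment, badNet.IsAssignment π →
      ∃ v ∈ ({1, 2, 3} : Set (Fin 4)), ¬ badNet.StableAt lam π v :=
  badGadget_no_stable_assignment_general lam ha1 ha2 ha3 hb1 hb2 hb3 hc1 hc2 hc3
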